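/- Let Φ, Φ̃ : ℂⁿ → ℝ be strictly plurisubharmonic quadratic forms with Φ̃ ≤ Φ pointwise, let κ♭ : ℂⁿ → ℂⁿ be an ℝ-linear isomorphism, let â ∈ ℂ, and let Ψ be a holomorphic quadratic form on ℂ^{2n} such that 2 Re Ψ(z, w̄) = Φ̃(z) + Φ(w) − R(z, w) for all z, w ∈ ℂⁿ, where R is a nonnegative quadratic form on ℂⁿ × ℂⁿ satisfying c|z − κ♭(w)|² ≤ R(z, w) ≤ C|z − κ♭(w)|² for some C, c > 0. Let u be an entire function with |u(w)| ≤ C₀⟨w⟩^{N} e^{Φ(w)} on ℂⁿ for some C₀ > 0, N ∈ ℝ, and set G u(z) = â ∫_{ℂⁿ} e^{2Ψ(z,w̄)} u(w) e^{-2Φ(w)} dL(w). If w₀ ∈ ℂⁿ∖{0} satisfies w₀ ∉ WF^{1/2}_Φ(u), then κ♭(w₀) ∉ WF^{1/2}_Φ(Gu); consequently WF^{1/2}_Φ(Gu) ⊆ κ♭(WF^{1/2}_Φ(u)). -/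

import Mathlib

open Matrix MeasureTheory ENNReal

noncomputable section

/-- The squared Euclidean norm `|z|²` on `ℂⁿ`. -/
def eSq {n : ℕ} (z : Fin n → ℂ) : ℝ := ∑ i, Complex.normSq (z i)

/-- The Japanese bracket `⟨z⟩ = (1 + |z|²)^{1/2}`. -/
def jb {n : ℕ} (z : Fin n → ℂ) : ℝ := Real.sqrt (1 + eSq z)

/-- `Φ : ℂⁿ → ℝ` is a (real) quadratic form of the underlying real coordinates. -/
def IsRQuad {n : ℕ} (Φ : (Fin n → ℂ) → ℝ) : Prop :=
  ∃ B : (Fin n → ℂ) →ₗ[ℝ] (Fin n → ℂ) →ₗ[ℝ] ℝ, ∀ z, Φ z = B z z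

/-- `Φ : ℂⁿ → ℝ` is a strictly plurisubharmonic quadratic form.  For a quadratic form `Φ`,
the Levi form satisfies `(∂²_{z z̄}Φ) w ⋅ w̄ = (Φ(w) + Φ(i w))/2`, so positive definiteness of
the Levi matrix is equivalent to `Φ(w) + Φ(i·w) > 0` for all `w ≠ 0`. -/
def IsSPSH {n : ℕ} (Φ : (Fin n → ℂ) → ℝ) : Prop :=
  IsRQuad Φ ∧ ∀ z : Fin n → ℂ, z ≠ 0 → 0 < Φ z + Φ (Complex.I • z)

/-- The squared weighted norm `‖u‖_s² = ∫ |u(z)|² ⟨z⟩^{2s} e^{-2Φ(z)} L(dz)` (in `ℝ≥0∞`). -/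
def hnorm {n : ℕ} (Φ : (Fin n → ℂ) → ℝ) (s : ℝ) (u : (Fin n → ℂ) → ℂ) : ℝ≥0∞ :=
  ∫⁻ z : Fin n → ℂ, (‖u z‖₊ : ℝ≥0∞) ^ 2 * ENNReal.ofReal (jb z ^ (2 * s) * Real.exp (-2 * Φ z))

/-- A conic subset of `ℂⁿ`. -/
def IsConic {n : ℕ} (V : Set (Fin n → ℂ)) : Prop := ∀ z ∈ V, ∀ t : ℝ, 0 < t → t • z ∈ V

/-- The `1/2`-Gelfand–Shilov wavefront set of `u` relative to `Φ`: the complement in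
`ℂⁿ∖{0}` of the points having an open conic neighborhood in `ℂⁿ∖{0}` on which
`|u(z)| ≤ C e^{Φ(z) - c|z|²}`. -/
def wf {n : ℕ} (Φ : (Fin n → ℂ) → ℝ) (u : (Fin n → ℂ) → ℂ) : Set (Fin n → ℂ) :=
  {z₀ | z₀ ≠ 0 ∧ ¬ ∃ V : Set (Fin n → ℂ), IsOpen V ∧ IsConic V ∧ (0 : Fin n → ℂ) ∉ V ∧ z₀ ∈ V ∧
      ∃ C c : ℝ, 0 < C ∧ 0 < c ∧ ∀ z ∈ V, ‖u z‖ ≤ C * Real.exp (Φ z - c * eSq z)}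

/-- A holomorphic quadratic form on `ℂ^{2n} = ℂⁿ_z × ℂⁿ_θ`. -/
def IsCQuad2 {n : ℕ} (Ψ : (Fin n → ℂ) → (Fin n → ℂ) → ℂ) : Prop :=
  ∃ B : ((Fin n → ℂ) × (Fin n → ℂ)) →ₗ[ℂ] ((Fin n → ℂ) × (Fin n → ℂ)) →ₗ[ℂ] ℂ,
    ∀ z θ, Ψ z θ = B (z, θ) (z, θ)

/-- A real quadratic form on `ℂⁿ × ℂⁿ` viewed as a real vector space. -/
def IsRQuadPair {n : ℕ} (R : (Fin n → ℂ) → (Fin n → ℂ) → ℝ) : Prop :=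
  ∃ B : ((Fin n → ℂ) × (Fin n → ℂ)) →ₗ[ℝ] ((Fin n → ℂ) × (Fin n → ℂ)) →ₗ[ℝ] ℝ,
    ∀ z w, R z w = B (z, w) (z, w)

/-- The Bergman-form integral operator
`G u (z) = a ∫ e^{2Ψ(z, w̄)} u(w) e^{-2Φ(w)} L(dw)`. -/
def berg {n : ℕ} (a : ℂ) (Ψ : (Fin n → ℂ) → (Fin n → ℂ) → ℂ) (Φ : (Fin n → ℂ) → ℝ)
    (u : (Fin n → ℂ) → ℂ) (z : Fin n → ℂ) : ℂ :=
  a * ∫ w : Fin n → ℂ, Complex.exp (2 * Ψ z (star w)) * u w * (Real.exp (-2 * Φ w) : ℂ)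

/-!
The kernel bound `2 Re Ψ(z, w̄) ≤ Φ(z) + Φ(w) - c|z - κw|²` reduces everything to a Gaussian
estimate of `e^{-c|z - κw|²} |u(w)| e^{-Φ(w)}`. Suppose `|u| ≤ C₁ e^{Φ - c₁|w|²}` on an open cone
`V ∋ w₀` and take an open cone `W ∋ κ w₀` so thin that `κ⁻¹ W` stays away from the complement of
`V`. For `w ∈ V`, the decay of `u` together with `|z|² ≲ |z - κw|² + |w|²` gives Gaussian decay
in `(z, w)`. For `w ∉ V`, the separation of the cones gives `|z|² + |w|² ≲ |z - κw|²`, and this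
absorbs the polynomial growth `⟨w⟩^N` of `u`. Integrating in `w` then gives
`|Gu(z)| ≤ C e^{Φ(z) - l|z|²}` on `W`.
-/

section ConeSeparation

open Metric

variable {E F : Type*} [NormedAddCommGroup E] [NormedSpace ℝ E]
  [NormedAddCommGroup F] [NormedSpace ℝ F]

lemma mul_norm_le_mul_norm_sub_of_notMem {V : Set E}
    (hVc : ∀ z ∈ V, ∀ t : ℝ, 0 < t → t • z ∈ V) {w₀ : E} {ρ : ℝ}
    (hball : ball w₀ (2 * ρ) ⊆ V) {t : ℝ} (ht : 0 < t) {ζ w : E}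
    (hζ : t • ζ ∈ ball w₀ ρ) (hw : w ∉ V) :
    ρ * ‖ζ‖ ≤ (‖w₀‖ + ρ) * ‖ζ - w‖ := by
  rw [mem_ball, dist_eq_norm] at hζ
  have hfar : 2 * ρ ≤ ‖t • w - w₀‖ := by
    by_contra! h
    have := hVc _ (hball (by rwa [mem_ball, dist_eq_norm])) t⁻¹ (inv_pos.2 ht)
    rw [smul_smul, inv_mul_cancel₀ ht.ne', one_smul] at this
    exact hw this
  have hsub : ‖t • w - w₀‖ ≤ t * ‖ζ - w‖ + ‖t • ζ - w₀‖ := by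
    calc ‖t • w - w₀‖ ≤ ‖t • w - t • ζ‖ + ‖t • ζ - w₀‖ := norm_sub_le_norm_sub_add_norm_sub _ _ _
      _ = t * ‖ζ - w‖ + ‖t • ζ - w₀‖ := by
        rw [← smul_sub, norm_smul, Real.norm_of_nonneg ht.le, norm_sub_rev]
  have hζle : t * ‖ζ‖ ≤ ‖w₀‖ + ρ := by
    calc t * ‖ζ‖ = ‖t • ζ - w₀ + w₀‖ := by
          rw [sub_add_cancel, norm_smul, Real.norm_of_nonneg ht.le]
      _ ≤ ‖w₀‖ + ρ := by linarith [norm_add_le (t • ζ - w₀) w₀]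
  have hρ : 0 ≤ ρ := by linarith [norm_nonneg (t • ζ - w₀)]
  nlinarith [norm_nonneg ζ, norm_nonneg (ζ - w), norm_nonneg w₀]

lemma exists_isOpen_cone_norm_add_le {V : Set E} (hVo : IsOpen V)
    (hVc : ∀ z ∈ V, ∀ t : ℝ, 0 < t → t • z ∈ V) (hV0 : (0 : E) ∉ V) {w₀ : E} (hw₀ : w₀ ∈ V) :
    ∃ W : Set E, IsOpen W ∧ (∀ z ∈ W, ∀ t : ℝ, 0 < t → t • z ∈ W) ∧ (0 : E) ∉ W ∧ w₀ ∈ W ∧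
      ∃ K : ℝ, 0 < K ∧ ∀ ζ ∈ W, ∀ w ∉ V, ‖ζ‖ + ‖w‖ ≤ K * ‖ζ - w‖ := by
  obtain ⟨r, hr, hball⟩ := Metric.isOpen_iff.mp hVo w₀ hw₀
  set ρ := r / 2 with hρr
  have hρ : 0 < ρ := half_pos hr
  have hρw₀ : ρ < ‖w₀‖ := by
    have : ¬ dist 0 w₀ < r := fun h => hV0 (hball h)
    rw [dist_comm, dist_zero_right] at this
    linarith
  refine ⟨⋃ t > (0 : ℝ), (t • ·) ⁻¹' ball w₀ ρ,
    isOpen_biUnion fun t _ => isOpen_ball.preimage (continuous_const_smul t), ?_, ?_, ?_, ?_⟩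
  · simp only [Set.mem_iUnion, Set.mem_preimage]
    rintro z ⟨s, hs, hz⟩ t ht
    refine ⟨s / t, div_pos hs ht, ?_⟩
    rwa [smul_smul, div_mul_cancel₀ s ht.ne']
  · simp only [Set.mem_iUnion, Set.mem_preimage, smul_zero, mem_ball, dist_zero_left]
    rintro ⟨t, -, h⟩
    exact h.not_gt hρw₀
  · simp only [Set.mem_iUnion, Set.mem_preimage]
    exact ⟨1, one_pos, by simpa using hρ⟩
  · refine ⟨2 * ((‖w₀‖ + ρ) / ρ) + 1, by positivity, fun ζ hζ w hw => ?_⟩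
    simp only [Set.mem_iUnion, Set.mem_preimage] at hζ
    obtain ⟨t, ht, hζ⟩ := hζ
    have hsep := mul_norm_le_mul_norm_sub_of_notMem hVc (by rwa [two_mul, add_halves]) ht hζ hw
    have hζK : ‖ζ‖ ≤ (‖w₀‖ + ρ) / ρ * ‖ζ - w‖ := by
      rw [div_mul_eq_mul_div, le_div_iff₀ hρ]; linarith
    have hwle : ‖w‖ ≤ ‖ζ‖ + ‖ζ - w‖ := by
      simpa using norm_sub_le ζ (ζ - w)
    nlinarith [norm_nonneg (ζ - w)]

lemma exists_isOpen_cone_norm_add_le_map (e : E ≃L[ℝ] F) {V : Set E} (hVo : IsOpen V)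
    (hVc : ∀ z ∈ V, ∀ t : ℝ, 0 < t → t • z ∈ V) (hV0 : (0 : E) ∉ V) {w₀ : E} (hw₀ : w₀ ∈ V) :
    ∃ W : Set F, IsOpen W ∧ (∀ z ∈ W, ∀ t : ℝ, 0 < t → t • z ∈ W) ∧ (0 : F) ∉ W ∧ e w₀ ∈ W ∧
      ∃ K : ℝ, ∀ z ∈ W, ∀ w ∉ V, ‖z‖ + ‖w‖ ≤ K * ‖z - e w‖ := by
  obtain ⟨W, hWo, hWc, hW0, hw₀W, K, hK0, hK⟩ := exists_isOpen_cone_norm_add_le hVo hVc hV0 hw₀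
  refine ⟨e.symm ⁻¹' W, hWo.preimage e.symm.continuous, fun z hz t ht => ?_, by simpa using hW0,
    by simpa using hw₀W, (‖(e : E →L[ℝ] F)‖ + 1) * K * ‖(e.symm : F →L[ℝ] E)‖, fun z hz w hw => ?_⟩
  · simpa using hWc _ hz t ht
  · have h := hK _ hz w hw
    have hz : ‖z‖ ≤ ‖(e : E →L[ℝ] F)‖ * ‖e.symm z‖ := by
      simpa using (e : E →L[ℝ] F).le_opNorm (e.symm z)
    have hd : ‖e.symm z - w‖ ≤ ‖(e.symm : F →L[ℝ] E)‖ * ‖z - e w‖ := by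
      simpa using (e.symm : F →L[ℝ] E).le_opNorm (z - e w)
    calc ‖z‖ + ‖w‖ ≤ (‖(e : E →L[ℝ] F)‖ + 1) * (‖e.symm z‖ + ‖w‖) := by
          nlinarith [norm_nonneg (e.symm z), norm_nonneg w, norm_nonneg (e : E →L[ℝ] F)]
      _ ≤ (‖(e : E →L[ℝ] F)‖ + 1) * (K * ‖e.symm z - w‖) := by gcongr
      _ ≤ _ := by
        rw [mul_assoc, mul_assoc]; gcongr

end ConeSeparation

open Nat in
lemma pow_le_factorial_div_mul_exp (k : ℕ) {δ x : ℝ} (hδ : 0 < δ) (hx : 0 ≤ x) :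
    x ^ k ≤ k ! / δ ^ k * Real.exp (δ * x) := by
  have h := Real.pow_div_factorial_le_exp _ (mul_nonneg hδ.le hx) k
  rw [mul_pow, div_le_iff₀ (by positivity)] at h
  rw [div_mul_eq_mul_div, le_div_iff₀ (by positivity)]
  linarith

section EuclideanNorm

variable {n : ℕ}

lemma eSq_nonneg (z : Fin n → ℂ) : 0 ≤ eSq z :=
  Finset.sum_nonneg fun i _ => Complex.normSq_nonneg (z i)

lemma sq_norm_le_eSq (z : Fin n → ℂ) : ‖z‖ ^ 2 ≤ eSq z := by
  rw [← Real.le_sqrt (norm_nonneg z) (eSq_nonneg z)]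
  refine (pi_norm_le_iff_of_nonneg (Real.sqrt_nonneg _)).2 fun i => ?_
  rw [Real.le_sqrt (norm_nonneg _) (eSq_nonneg z), Complex.sq_norm]
  exact Finset.single_le_sum (f := fun i => Complex.normSq (z i))
    (fun j _ => Complex.normSq_nonneg (z j)) (Finset.mem_univ i)

lemma eSq_le_card_mul_sq_norm (z : Fin n → ℂ) : eSq z ≤ n * ‖z‖ ^ 2 := by
  calc eSq z ≤ ∑ _i : Fin n, ‖z‖ ^ 2 := Finset.sum_le_sum fun i _ => by
        rw [← Complex.sq_norm]; gcongr; exact norm_le_pi_norm z i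
    _ = n * ‖z‖ ^ 2 := by simp

lemma eSq_add_le_of_norm_add_le {x y z : Fin n → ℂ} {K : ℝ} (h : ‖x‖ + ‖y‖ ≤ K * ‖z‖) :
    eSq x + eSq y ≤ n * K ^ 2 * eSq z :=
  calc eSq x + eSq y ≤ n * ‖x‖ ^ 2 + n * ‖y‖ ^ 2 :=
        add_le_add (eSq_le_card_mul_sq_norm x) (eSq_le_card_mul_sq_norm y)
    _ ≤ n * (‖x‖ + ‖y‖) ^ 2 := by
        have : 0 ≤ (n : ℝ) * (‖x‖ * ‖y‖) := by positivity
        nlinarith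
    _ ≤ n * (K * ‖z‖) ^ 2 := by gcongr
    _ ≤ n * K ^ 2 * eSq z := by
        rw [mul_pow, ← mul_assoc]; gcongr; exact sq_norm_le_eSq z

lemma eSq_le_of_norm_le_add {x y z : Fin n → ℂ} {K : ℝ} (h : ‖x‖ ≤ K * (‖y‖ + ‖z‖)) :
    eSq x ≤ 2 * n * K ^ 2 * (eSq y + eSq z) :=
  calc eSq x ≤ n * (K * (‖y‖ + ‖z‖)) ^ 2 := by
        refine (eSq_le_card_mul_sq_norm x).trans ?_; gcongr
    _ ≤ 2 * n * K ^ 2 * (‖y‖ ^ 2 + ‖z‖ ^ 2) := by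
        nlinarith [sq_nonneg (‖y‖ - ‖z‖), (Nat.cast_nonneg n : (0 : ℝ) ≤ n), sq_nonneg K,
          mul_nonneg (Nat.cast_nonneg n : (0 : ℝ) ≤ n) (sq_nonneg K)]
    _ ≤ 2 * n * K ^ 2 * (eSq y + eSq z) := by
        gcongr <;> exact sq_norm_le_eSq _

lemma integrable_exp_neg_mul_normSq {γ : ℝ} (hγ : 0 < γ) :
    Integrable fun v : ℂ => Real.exp (-γ * Complex.normSq v) := by
  have h := (Complex.volume_preserving_equiv_real_prod.integrable_comp_emb
    Complex.measurableEquivRealProd.measurableEmbedding).2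
    ((integrable_exp_neg_mul_sq hγ).mul_prod (integrable_exp_neg_mul_sq hγ))
  have hf : ((fun p : ℝ × ℝ => Real.exp (-γ * p.1 ^ 2) * Real.exp (-γ * p.2 ^ 2)) ∘
      Complex.measurableEquivRealProd) = fun v => Real.exp (-γ * Complex.normSq v) := by
    funext v
    simp only [Function.comp_apply, Complex.measurableEquivRealProd_apply,
      Complex.normSq_apply, ← Real.exp_add]
    ring_nf
  rwa [hf] at h

lemma integrable_exp_neg_mul_eSq {γ : ℝ} (hγ : 0 < γ) :
    Integrable fun w : Fin n → ℂ => Real.exp (-γ * eSq w) := by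
  have h := Integrable.fintype_prod
    (f := fun (_ : Fin n) (v : ℂ) => Real.exp (-γ * Complex.normSq v))
    fun _ => integrable_exp_neg_mul_normSq hγ
  have hf : (fun w : Fin n → ℂ => ∏ i, Real.exp (-γ * Complex.normSq (w i)))
      = fun w => Real.exp (-γ * eSq w) := by
    funext w
    rw [← Real.exp_sum, eSq, Finset.mul_sum]
  rwa [hf] at h

lemma one_le_jb (z : Fin n → ℂ) : 1 ≤ jb z :=
  Real.one_le_sqrt.2 (le_add_of_nonneg_right (eSq_nonneg z))

lemma jb_le_one_add_eSq (z : Fin n → ℂ) : jb z ≤ 1 + eSq z := by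
  have h := Real.sq_sqrt (add_nonneg zero_le_one (eSq_nonneg z))
  have h1 := one_le_jb z
  rw [jb] at h1 ⊢
  nlinarith

lemma exists_jb_rpow_le_mul_exp (N : ℝ) {δ : ℝ} (hδ : 0 < δ) :
    ∃ A : ℝ, ∀ z : Fin n → ℂ, jb z ^ N ≤ A * Real.exp (δ * eSq z) := by
  set k := ⌈N⌉₊
  refine ⟨k.factorial / δ ^ k * Real.exp δ, fun z => ?_⟩
  calc jb z ^ N ≤ jb z ^ (k : ℝ) := Real.rpow_le_rpow_of_exponent_le (one_le_jb z) (Nat.le_ceil N)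
    _ ≤ (1 + eSq z) ^ k := by
        rw [Real.rpow_natCast]; gcongr
        · exact zero_le_one.trans (one_le_jb z)
        · exact jb_le_one_add_eSq z
    _ ≤ k.factorial / δ ^ k * Real.exp (δ * (1 + eSq z)) :=
        pow_le_factorial_div_mul_exp k hδ (add_nonneg zero_le_one (eSq_nonneg z))
    _ = k.factorial / δ ^ k * Real.exp δ * Real.exp (δ * eSq z) := by
        rw [mul_one_add, Real.exp_add, mul_assoc]

end EuclideanNorm

section Bergman

variable {n : ℕ} {a : ℂ} {Ψ : (Fin n → ℂ) → (Fin n → ℂ) → ℂ} {Φ : (Fin n → ℂ) → ℝ}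
  {u : (Fin n → ℂ) → ℂ}

lemma exists_gaussian_bound_on_cone (κ : (Fin n → ℂ) → (Fin n → ℂ)) {V W : Set (Fin n → ℂ)}
    {v : (Fin n → ℂ) → ℝ} {c c₁ C₁ A K L : ℝ} (hc : 0 < c) (hc₁ : 0 < c₁) (hC₁ : 0 ≤ C₁)
    (hK : 0 ≤ K) (hL : 0 < L)
    (hnear : ∀ z w, eSq z ≤ K * (eSq (z - κ w) + eSq w))
    (hfar : ∀ z ∈ W, ∀ w ∉ V, eSq z + eSq w ≤ L * eSq (z - κ w))
    (hvV : ∀ w ∈ V, v w ≤ C₁ * Real.exp (-c₁ * eSq w))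
    (hv : ∀ w, v w ≤ A * Real.exp (c / (2 * L) * eSq w)) :
    ∃ l > 0, ∀ z ∈ W, ∀ w, Real.exp (-c * eSq (z - κ w)) * v w
      ≤ max C₁ A * Real.exp (-l * (eSq z + eSq w)) := by
  set m := min (min c c₁) (c / L)
  have hm : 0 < m := lt_min (lt_min hc hc₁) (div_pos hc hL)
  have hmc : m ≤ c := (min_le_left _ _).trans (min_le_left _ _)
  have hmc₁ : m ≤ c₁ := (min_le_left _ _).trans (min_le_right _ _)
  have hmL : m * L ≤ c := (le_div_iff₀ hL).1 (min_le_right _ _)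
  obtain ⟨l, hl, hlK, hlm⟩ : ∃ l : ℝ, 0 < l ∧ l * (K + 1) = m / 2 ∧ l ≤ m / 2 := by
    refine ⟨m / 2 / (K + 1), by positivity, div_mul_cancel₀ _ (by positivity), ?_⟩
    exact div_le_self (by positivity) (by linarith)
  refine ⟨l, hl, fun z hz w => ?_⟩
  have hx := eSq_nonneg z
  have hy := eSq_nonneg w
  have hd := eSq_nonneg (z - κ w)
  by_cases hw : w ∈ V
  · have hexp : -c * eSq (z - κ w) + -c₁ * eSq w ≤ -l * (eSq z + eSq w) := by
      have h1 := mul_le_mul_of_nonneg_left (hnear z w) hl.le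
      have h2 : l * K * eSq (z - κ w) ≤ c * eSq (z - κ w) := by gcongr; nlinarith
      have h3 : l * (K + 1) * eSq w ≤ c₁ * eSq w := by gcongr; linarith
      nlinarith
    calc Real.exp (-c * eSq (z - κ w)) * v w
        ≤ Real.exp (-c * eSq (z - κ w)) * (C₁ * Real.exp (-c₁ * eSq w)) := by
          gcongr; exact hvV w hw
      _ = C₁ * Real.exp (-c * eSq (z - κ w) + -c₁ * eSq w) := by
          rw [Real.exp_add]; ring
      _ ≤ max C₁ A * Real.exp (-l * (eSq z + eSq w)) := by
          gcongr; exact le_max_left _ _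
  · have hexp : -c * eSq (z - κ w) + c / (2 * L) * eSq w ≤ -l * (eSq z + eSq w) := by
      have h1 := hfar z hz w hw
      have h2 : l * (eSq z + eSq w) ≤ c / 2 * eSq (z - κ w) := by
        calc l * (eSq z + eSq w) ≤ m / 2 * (L * eSq (z - κ w)) := by gcongr
          _ ≤ c / 2 * eSq (z - κ w) := by rw [← mul_assoc]; gcongr; linarith
      have h3 : c / (2 * L) * eSq w ≤ c / 2 * eSq (z - κ w) := by
        calc c / (2 * L) * eSq w ≤ c / (2 * L) * (L * eSq (z - κ w)) := by gcongr; linarith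
          _ = c / 2 * eSq (z - κ w) := by field_simp
      linarith
    calc Real.exp (-c * eSq (z - κ w)) * v w
        ≤ Real.exp (-c * eSq (z - κ w)) * (A * Real.exp (c / (2 * L) * eSq w)) := by
          gcongr; exact hv w
      _ = A * Real.exp (-c * eSq (z - κ w) + c / (2 * L) * eSq w) := by
          rw [Real.exp_add]; ring
      _ ≤ max C₁ A * Real.exp (-l * (eSq z + eSq w)) := by
          gcongr; exact le_max_right _ _

lemma norm_berg_integrand (z w : Fin n → ℂ) :
    ‖Complex.exp (2 * Ψ z (star w)) * u w * (Real.exp (-2 * Φ w) : ℂ)‖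
      = Real.exp (2 * (Ψ z (star w)).re) * ‖u w‖ * Real.exp (-2 * Φ w) := by
  rw [norm_mul, norm_mul, Complex.norm_exp, Complex.norm_real, Real.norm_of_nonneg
    (Real.exp_pos _).le, Complex.mul_re, Complex.re_ofNat, Complex.im_ofNat, zero_mul, sub_zero]

lemma norm_berg_le {z : Fin n → ℂ} {B γ : ℝ} (hγ : 0 < γ)
    (h : ∀ w, ‖Complex.exp (2 * Ψ z (star w)) * u w * (Real.exp (-2 * Φ w) : ℂ)‖
      ≤ B * Real.exp (-γ * eSq w)) :
    ‖berg a Ψ Φ u z‖ ≤ ‖a‖ * B * ∫ w : Fin n → ℂ, Real.exp (-γ * eSq w) := by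
  rw [berg, norm_mul, mul_assoc, ← integral_const_mul]
  gcongr
  exact norm_integral_le_of_norm_le ((integrable_exp_neg_mul_eSq hγ).const_mul B)
    (Filter.Eventually.of_forall h)

lemma norm_berg_le_of_exp_mul_le (κ : (Fin n → ℂ) → (Fin n → ℂ)) {c D l : ℝ} (hl : 0 < l)
    (hΨ : ∀ z w, 2 * (Ψ z (star w)).re ≤ Φ z + Φ w - c * eSq (z - κ w)) {z : Fin n → ℂ}
    (h : ∀ w, Real.exp (-c * eSq (z - κ w)) * (‖u w‖ * Real.exp (-Φ w))
      ≤ D * Real.exp (-l * (eSq z + eSq w))) :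
    ‖berg a Ψ Φ u z‖
      ≤ ‖a‖ * D * (∫ w : Fin n → ℂ, Real.exp (-l * eSq w)) * Real.exp (Φ z - l * eSq z) := by
  refine (norm_berg_le (B := D * Real.exp (Φ z - l * eSq z)) hl fun w => ?_).trans_eq (by ring)
  rw [norm_berg_integrand]
  calc Real.exp (2 * (Ψ z (star w)).re) * ‖u w‖ * Real.exp (-2 * Φ w)
      ≤ Real.exp (Φ z + Φ w - c * eSq (z - κ w)) * ‖u w‖ * Real.exp (-2 * Φ w) := by
        gcongr; exact hΨ z w
    _ = ‖u w‖ * Real.exp (Φ z + Φ w - c * eSq (z - κ w) + -2 * Φ w) := by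
        rw [Real.exp_add]; ring
    _ = Real.exp (Φ z) * (Real.exp (-c * eSq (z - κ w)) * (‖u w‖ * Real.exp (-Φ w))) := by
        rw [show Φ z + Φ w - c * eSq (z - κ w) + -2 * Φ w = Φ z + -c * eSq (z - κ w) + -Φ w by
          ring, Real.exp_add, Real.exp_add]; ring
    _ ≤ Real.exp (Φ z) * (D * Real.exp (-l * (eSq z + eSq w))) :=
        mul_le_mul_of_nonneg_left (h w) (Real.exp_pos _).le
    _ = D * Real.exp (Φ z - l * eSq z) * Real.exp (-l * eSq w) := by
        rw [mul_left_comm, mul_assoc, ← Real.exp_add, ← Real.exp_add]; ring_nf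

theorem apply_notMem_wf_berg (κ : (Fin n → ℂ) ≃ₗ[ℝ] (Fin n → ℂ)) {c : ℝ} (hc : 0 < c)
    (hΨ : ∀ z w, 2 * (Ψ z (star w)).re ≤ Φ z + Φ w - c * eSq (z - κ w))
    {C₀ N : ℝ} (hC₀ : 0 ≤ C₀) (hg : ∀ w, ‖u w‖ ≤ C₀ * jb w ^ N * Real.exp (Φ w))
    {w₀ : Fin n → ℂ} (hw₀ : w₀ ≠ 0) (hu₀ : w₀ ∉ wf Φ u) : κ w₀ ∉ wf Φ (berg a Ψ Φ u) := by
  obtain ⟨V, hVo, hVc, hV0, hw₀V, C₁, c₁, hC₁, hc₁, huV⟩ := not_not.mp (not_and.mp hu₀ hw₀)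
  obtain ⟨W, hWo, hWc, hW0, hκW, K, hK⟩ :=
    exists_isOpen_cone_norm_add_le_map κ.toContinuousLinearEquiv hVo hVc hV0 hw₀V
  simp only [LinearEquiv.coe_toContinuousLinearEquiv'] at hκW hK
  set e : (Fin n → ℂ) →L[ℝ] (Fin n → ℂ) := κ.toContinuousLinearEquiv.toContinuousLinearMap
  have hnear : ∀ z w, eSq z ≤ 2 * n * (‖e‖ + 1) ^ 2 * (eSq (z - κ w) + eSq w) := fun z w =>
    eSq_le_of_norm_le_add <| calc
      ‖z‖ ≤ ‖z - κ w‖ + ‖e‖ * ‖w‖ :=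
        (norm_le_norm_sub_add z (κ w)).trans (by gcongr; exact e.le_opNorm w)
      _ ≤ (‖e‖ + 1) * (‖z - κ w‖ + ‖w‖) := by
        nlinarith [norm_nonneg (z - κ w), norm_nonneg w, norm_nonneg e]
  set L := n * K ^ 2 + 1
  have hfar : ∀ z ∈ W, ∀ w ∉ V, eSq z + eSq w ≤ L * eSq (z - κ w) := fun z hz w hw =>
    (eSq_add_le_of_norm_add_le (hK z hz w hw)).trans (by nlinarith [eSq_nonneg (z - κ w)])
  obtain ⟨A, hA⟩ := exists_jb_rpow_le_mul_exp (n := n) N (δ := c / (2 * L)) (by positivity)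
  have hvV : ∀ w ∈ V, ‖u w‖ * Real.exp (-Φ w) ≤ C₁ * Real.exp (-c₁ * eSq w) := fun w hw =>
    calc ‖u w‖ * Real.exp (-Φ w) ≤ C₁ * Real.exp (Φ w - c₁ * eSq w) * Real.exp (-Φ w) := by
          gcongr; exact huV w hw
      _ = C₁ * Real.exp (-c₁ * eSq w) := by rw [mul_assoc, ← Real.exp_add]; ring_nf
  have hv : ∀ w, ‖u w‖ * Real.exp (-Φ w) ≤ C₀ * A * Real.exp (c / (2 * L) * eSq w) := fun w =>
    calc ‖u w‖ * Real.exp (-Φ w) ≤ C₀ * jb w ^ N * Real.exp (Φ w) * Real.exp (-Φ w) := by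
          gcongr; exact hg w
      _ = C₀ * jb w ^ N := by rw [mul_assoc, ← Real.exp_add, add_neg_cancel, Real.exp_zero, mul_one]
      _ ≤ C₀ * A * Real.exp (c / (2 * L) * eSq w) := by rw [mul_assoc]; gcongr; exact hA w
  obtain ⟨l, hl, hbound⟩ := exists_gaussian_bound_on_cone κ hc hc₁ hC₁.le (by positivity)
    (by positivity) hnear hfar hvV hv
  have hI : 0 ≤ ∫ w : Fin n → ℂ, Real.exp (-l * eSq w) :=
    integral_nonneg fun w => (Real.exp_pos _).le
  refine fun hwf => hwf.2 ⟨W, hWo, hWc, hW0, hκW, _, l, by positivity, hl, fun z hz =>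
    (norm_berg_le_of_exp_mul_le κ hl hΨ (hbound z hz)).trans
      (mul_le_mul_of_nonneg_right (le_add_of_nonneg_right zero_le_one) (Real.exp_pos _).le)⟩

end Bergman

theorem stmt_10_general (n : ℕ) (Φ Φt : (Fin n → ℂ) → ℝ)
    (hle : ∀ z, Φt z ≤ Φ z)
    (κ : (Fin n → ℂ) ≃ₗ[ℝ] (Fin n → ℂ)) (a : ℂ)
    (Ψ : (Fin n → ℂ) → (Fin n → ℂ) → ℂ)
    (R : (Fin n → ℂ) → (Fin n → ℂ) → ℝ)
    (hre : ∀ z w : Fin n → ℂ, 2 * (Ψ z (star w)).re = Φt z + Φ w - R z w)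
    (C c : ℝ) (hc : 0 < c)
    (hsand : ∀ z w : Fin n → ℂ, c * eSq (z - κ w) ≤ R z w ∧ R z w ≤ C * eSq (z - κ w))
    (u : (Fin n → ℂ) → ℂ)
    (C₀ N : ℝ) (hC₀ : 0 < C₀)
    (hg : ∀ w : Fin n → ℂ, ‖u w‖ ≤ C₀ * jb w ^ N * Real.exp (Φ w)) :
    (∀ w₀ : Fin n → ℂ, w₀ ≠ 0 → w₀ ∉ wf Φ u → κ w₀ ∉ wf Φ (berg a Ψ Φ u)) ∧
    wf Φ (berg a Ψ Φ u) ⊆ (fun w => κ w) '' wf Φ u := by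
  have hΨ : ∀ z w, 2 * (Ψ z (star w)).re ≤ Φ z + Φ w - c * eSq (z - κ w) := fun z w => by
    linarith [hre z w, hle z, (hsand z w).1]
  have hG : ∀ w₀ : Fin n → ℂ, w₀ ≠ 0 → w₀ ∉ wf Φ u → κ w₀ ∉ wf Φ (berg a Ψ Φ u) :=
    fun w₀ => apply_notMem_wf_berg κ hc hΨ hC₀.le hg
  refine ⟨hG, fun z hz => ⟨κ.symm z, ?_, κ.apply_symm_apply z⟩⟩
  by_contra h
  exact hG (κ.symm z) (by simpa using hz.1) h (by rwa [κ.apply_symm_apply])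

/-- Under the same Bergman-form hypotheses as Statement 9, the operator
`G` transports singularities by `κ♭`: if `w₀ ≠ 0` and `w₀ ∉ WF^{1/2}_Φ(u)`, then
`κ♭(w₀) ∉ WF^{1/2}_Φ(Gu)`; consequently `WF^{1/2}_Φ(Gu) ⊆ κ♭(WF^{1/2}_Φ(u))`. -/
theorem stmt_10 (n : ℕ) (hn : 1 ≤ n) (Φ Φt : (Fin n → ℂ) → ℝ)
    (hΦ : IsSPSH Φ) (hΦt : IsSPSH Φt) (hle : ∀ z, Φt z ≤ Φ z)
    (κ : (Fin n → ℂ) ≃ₗ[ℝ] (Fin n → ℂ)) (a : ℂ)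
    (Ψ : (Fin n → ℂ) → (Fin n → ℂ) → ℂ) (hΨ : IsCQuad2 Ψ)
    (R : (Fin n → ℂ) → (Fin n → ℂ) → ℝ) (hRq : IsRQuadPair R)
    (hR0 : ∀ z w, 0 ≤ R z w)
    (hre : ∀ z w : Fin n → ℂ, 2 * (Ψ z (star w)).re = Φt z + Φ w - R z w)
    (C c : ℝ) (hC : 0 < C) (hc : 0 < c)
    (hsand : ∀ z w : Fin n → ℂ, c * eSq (z - κ w) ≤ R z w ∧ R z w ≤ C * eSq (z - κ w))
    (u : (Fin n → ℂ) → ℂ) (hu : Differentiable ℂ u)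
    (C₀ N : ℝ) (hC₀ : 0 < C₀)
    (hg : ∀ w : Fin n → ℂ, ‖u w‖ ≤ C₀ * jb w ^ N * Real.exp (Φ w)) :
    (∀ w₀ : Fin n → ℂ, w₀ ≠ 0 → w₀ ∉ wf Φ u → κ w₀ ∉ wf Φ (berg a Ψ Φ u)) ∧
    wf Φ (berg a Ψ Φ u) ⊆ (fun w => κ w) '' wf Φ u :=
  stmt_10_general n Φ Φt hle κ a Ψ R hre C c hc hsand u C₀ N hC₀ hg
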